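/- For every integer g ≥ 1, the following identity holds in the polynomial ring ℤ[X]: X^{2g+1} + X = ∑_{k=0}^{⌊g/2⌋} (-1)^k · T(g, k) · X^{2k+1} · (X² + 1)^{g-2k}, where T(g, k) = C(g-k, k) + C(g-k-1, k-1) is the integer (g/(g-k))·C(g-k, k) (with T(g, 0) = 1). -/

import Mathlib

open Polynomial

/-- The Lucas-coefficient triangle `T(g, k) = C(g-k, k) + C(g-k-1, k-1)` as an integer,
with the convention `C(m, -1) = 0`, so that `T(g, 0) = 1`. -/
def lucasT (g k : ℕ) : ℤ :=
  (Nat.choose (g - k) k : ℤ) + if k = 0 then 0 else (Nat.choose (g - k - 1) (k - 1) : ℤ)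

/-!
Both sides are `X` times the two-variable Waring formula
`a^n + b^n = ∑_k (-1)^k T(n, k) (ab)^k (a + b)^(n-2k)` at `a = X²`, `b = 1`.
The formula holds for `n ≥ 1` because both sides satisfy the recurrence
`u (n + 2) = (a + b) u (n + 1) - ab u n`: for the power sums this is immediate, and for the sums
it is the Pascal-type rule `T(n+2, k+1) = T(n+1, k+1) + T(n, k)`.
-/

open Finset

@[simp]
lemma lucasT_zero_right (n : ℕ) : lucasT n 0 = 1 := by
  simp [lucasT]

lemma lucasT_eq_zero {n k : ℕ} (h : n < 2 * k) (hk : 2 ≤ k) : lucasT n k = 0 := by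
  rw [lucasT, if_neg (by omega), Nat.choose_eq_zero_of_lt (by omega),
    Nat.choose_eq_zero_of_lt (by omega)]
  simp

lemma lucasT_add_two {n k : ℕ} (h : 2 * k ≤ n) :
    lucasT (n + 2) (k + 1) = lucasT (n + 1) (k + 1) + lucasT n k := by
  obtain ⟨m, rfl⟩ : ∃ m, n = m + 2 * k := ⟨n - 2 * k, by omega⟩
  rcases k with _ | k
  · simp [lucasT, Nat.choose_one_right]
  · simp only [lucasT, Nat.add_one_ne_zero, if_false, Nat.add_sub_cancel,
      show m + 2 * (k + 1) + 2 - (k + 1 + 1) = m + k + 2 by omega,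
      show m + 2 * (k + 1) + 1 - (k + 1 + 1) = m + k + 1 by omega,
      show m + 2 * (k + 1) - (k + 1) = m + k + 1 by omega]
    push_cast [Nat.choose_succ_succ (m + k + 1) (k + 1), Nat.choose_succ_succ (m + k) k]
    ring

section Waring

variable {R : Type*} [CommRing R]

/-- Equal to `(dickson 1 p n).eval s` for `n ≥ 1`; at `n = 0` it is `1`, not `2`. -/
def lucasSum (s p : R) (n : ℕ) : R :=
  ∑ k ∈ range (n / 2 + 1), (-1) ^ k * lucasT n k * p ^ k * s ^ (n - 2 * k)

lemma lucasSum_eq_sum_range (s p : R) {n N : ℕ} (hn : 2 ≤ n) (hN : n / 2 < N) :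
    lucasSum s p n = ∑ k ∈ range N, (-1) ^ k * lucasT n k * p ^ k * s ^ (n - 2 * k) := by
  refine sum_subset (range_subset_range.mpr hN) fun k hkN hk => ?_
  rw [mem_range] at hkN hk
  rw [lucasT_eq_zero (by omega) (by omega)]
  simp

lemma lucasSum_add_two (s p : R) {n : ℕ} (hn : 1 ≤ n) :
    lucasSum s p (n + 2) = s * lucasSum s p (n + 1) - p * lucasSum s p n := by
  rw [lucasSum_eq_sum_range s p (by omega) (by omega : (n + 2) / 2 < n / 2 + 2),
    lucasSum_eq_sum_range s p (by omega) (by omega : (n + 1) / 2 < n / 2 + 2), lucasSum,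
    sum_range_succ', sum_range_succ' _ (n / 2 + 1), mul_add, mul_sum, mul_sum,
    ← sub_add_eq_add_sub, ← sum_sub_distrib]
  congr 1
  · refine sum_congr rfl fun k hk => ?_
    rw [mem_range] at hk
    rw [lucasT_add_two (by omega), show n + 2 - 2 * (k + 1) = n - 2 * k by omega]
    -- the exponent `n + 1 - 2 * (k + 1)` truncates when `n = 2k`, but then `T(n+1, k+1) = 0`
    have hs : (lucasT (n + 1) (k + 1) : R) * s ^ (n - 2 * k) =
        lucasT (n + 1) (k + 1) * (s * s ^ (n + 1 - 2 * (k + 1))) := by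
      rcases (by omega : 2 * k < n ∨ n = 2 * k) with hlt | rfl
      · rw [← pow_succ', show n + 1 - 2 * (k + 1) + 1 = n - 2 * k by omega]
      · rw [lucasT_eq_zero (by omega) (by omega)]
        simp
    push_cast
    linear_combination (-1) ^ (k + 1) * p ^ (k + 1) * hs
  · simp only [pow_zero, lucasT_zero_right, Int.cast_one, mul_one, mul_zero, tsub_zero, one_mul]
    ring

theorem pow_add_pow_eq_lucasSum (a b : R) :
    ∀ n, 1 ≤ n → a ^ n + b ^ n = lucasSum (a + b) (a * b) n
  | 1, _ => by simp [lucasSum]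
  | 2, _ => by
    have h : lucasT 2 1 = 2 := rfl
    rw [lucasSum, sum_range_succ, sum_range_one, h]
    norm_num
    ring
  | n + 3, _ => by
    rw [lucasSum_add_two _ _ (by omega : 1 ≤ n + 1),
      ← pow_add_pow_eq_lucasSum a b (n + 2) (by omega),
      ← pow_add_pow_eq_lucasSum a b (n + 1) (by omega)]
    ring

end Waring

/-- In `ℤ[X]`, for `g ≥ 1`:
`X^{2g+1} + X = ∑_{k=0}^{⌊g/2⌋} (-1)^k T(g, k) X^{2k+1} (X² + 1)^{g-2k}`. -/
theorem lockwood_polynomial_identity (g : ℕ) (hg : 1 ≤ g) :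
    (X : ℤ[X]) ^ (2 * g + 1) + X =
      ∑ k ∈ Finset.range (g / 2 + 1),
        Polynomial.C ((-1 : ℤ) ^ k * lucasT g k) * X ^ (2 * k + 1) *
          (X ^ 2 + 1) ^ (g - 2 * k) := by
  calc (X : ℤ[X]) ^ (2 * g + 1) + X = X * ((X ^ 2) ^ g + 1 ^ g) := by ring
    _ = X * lucasSum (X ^ 2 + 1) (X ^ 2) g := by rw [pow_add_pow_eq_lucasSum _ _ g hg, mul_one]
    _ = _ := by
      rw [lucasSum, mul_sum]
      refine sum_congr rfl fun k _ => ?_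
      rw [eq_intCast C]
      push_cast
      ring
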